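/- arXiv:2011.09758 — 3 statements merged into one kernel-verified Lean document; each statement's English description precedes it below -/
import Mathlib

section
/- Let U be a universe of separations and S ⊆ U a structurally submodular separation system. Then there is a nested set N ⊆ S such that any two distinct regular profiles of S are distinguished by some separation in N. -/
/-! Two separations distinguishing two pairs of regular profiles can be uncrossed: by structural
submodularity one of the two opposite corners `r ⊔ s`, `r* ⊔ s*` lies in `S`, and so does one of
`r ⊔ s*`, `r* ⊔ s`; since a regular profile of `S` is closed under joins and down-closed within
`S`, one of these corners still distinguishes one of the two pairs. So the sets of separations in
`S` distinguishing the pairs of distinct regular profiles splinter, and the splinter lemma of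
Elbracht, Kneip and Teegen yields a nested set meeting all of them. That lemma is proved by adding
the sets one at a time, choosing the new separation to cross as few of the previously chosen ones
as possible; by the fish lemma (a separation nested with two crossing ones is nested with all their
corners) such a choice is nested with some member of each of the other sets. -/

namespace SepDemo

/-- A universe of separations: a finite lattice with an order-reversing involution. -/
structure SepUniverse (U : Type*) [Lattice U] [Fintype U] where
  inv : U → U
  inv_inv : ∀ s, inv (inv s) = s
  le_iff : ∀ r s : U, r ≤ s ↔ inv s ≤ inv r

/-- A submodular universe: a universe with a submodular order function. -/
structure SubmodUniverse (U : Type*) [Lattice U] [Fintype U] extends SepUniverse U where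
  ord : U → ℕ
  ord_inv : ∀ s, ord (inv s) = ord s
  submod : ∀ s t : U, ord (s ⊔ t) + ord (s ⊓ t) ≤ ord s + ord t

variable {U : Type*} [Lattice U] [Fintype U]

/-- A separation system inside a universe: a subset closed under the involution. -/
def SepSystem (𝒰 : SepUniverse U) (S : Set U) : Prop :=
  ∀ s ∈ S, 𝒰.inv s ∈ S

/-- An orientation of `S`: contains, for each `s ∈ S`, exactly one of `s`, `s*`
(just `s` itself if `s` is degenerate). -/
def IsOrientation (𝒰 : SepUniverse U) (S O : Set U) : Prop :=
  O ⊆ S ∧ ∀ s ∈ S, (s ∈ O ∨ 𝒰.inv s ∈ O) ∧ (s ∈ O → 𝒰.inv s ∈ O → s = 𝒰.inv s)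

/-- Consistency: no `r, s ∈ O` with `{r,r*} ≠ {s,s*}` and `r* ≤ s`. -/
def Consistent (𝒰 : SepUniverse U) (O : Set U) : Prop :=
  ∀ r ∈ O, ∀ s ∈ O, ({r, 𝒰.inv r} : Set U) ≠ ({s, 𝒰.inv s} : Set U) → ¬ 𝒰.inv r ≤ s

/-- A profile of `S`: a consistent orientation satisfying the profile property. -/
def IsProfile (𝒰 : SepUniverse U) (S P : Set U) : Prop :=
  IsOrientation 𝒰 S P ∧ Consistent 𝒰 P ∧ ∀ r ∈ P, ∀ s ∈ P, 𝒰.inv (r ⊔ s) ∉ P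

/-- Regular: contains no cosmall separation. -/
def Regular (𝒰 : SepUniverse U) (P : Set U) : Prop :=
  ∀ s ∈ P, ¬ 𝒰.inv s ≤ s

/-- Two separations are nested. -/
def Nested (𝒰 : SepUniverse U) (r s : U) : Prop :=
  r ≤ s ∨ r ≤ 𝒰.inv s ∨ 𝒰.inv r ≤ s ∨ 𝒰.inv r ≤ 𝒰.inv s

/-- A set of separations is nested if its members are pairwise nested. -/
def NestedSet (𝒰 : SepUniverse U) (N : Set U) : Prop :=
  ∀ r ∈ N, ∀ s ∈ N, Nested 𝒰 r s

/-- `s` distinguishes the orientations `O₁` and `O₂`. -/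
def Distinguishes (𝒰 : SepUniverse U) (s : U) (O₁ O₂ : Set U) : Prop :=
  (s ∈ O₁ ∧ 𝒰.inv s ∈ O₂) ∨ (𝒰.inv s ∈ O₁ ∧ s ∈ O₂)

/-- Two orientations are distinguishable. -/
def Distinguishable (𝒰 : SepUniverse U) (P Q : Set U) : Prop :=
  ∃ s : U, Distinguishes 𝒰 s P Q

/-- Structural submodularity of a separation system. -/
def StructSubmodular (S : Set U) : Prop :=
  ∀ s ∈ S, ∀ t ∈ S, s ⊔ t ∈ S ∨ s ⊓ t ∈ S

/-- `s` is trivial in `S`. -/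
def IsTrivialIn (𝒰 : SepUniverse U) (S : Set U) (s : U) : Prop :=
  ∃ r ∈ S, ({r, 𝒰.inv r} : Set U) ≠ ({s, 𝒰.inv s} : Set U) ∧ s ≤ r ∧ s ≤ 𝒰.inv r

/-- A star of separations. -/
def IsStar (𝒰 : SepUniverse U) (σ : Set U) : Prop :=
  ∀ r ∈ σ, ∀ s ∈ σ, r ≠ s → r ≤ 𝒰.inv s

/-- The shift `σ_x^{s₀}` of a star `σ` at `x ∈ σ` to `s₀`. -/
def shiftStar (𝒰 : SepUniverse U) (σ : Set U) (x s₀ : U) : Set U :=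
  insert (x ⊔ s₀) ((fun y => y ⊓ 𝒰.inv s₀) '' (σ \ {x}))

/-- `s₀` emulates `r` in `S`. -/
def Emulates (𝒰 : SepUniverse U) (S : Set U) (s₀ r : U) : Prop :=
  r ≤ s₀ ∧ ∀ t ∈ S, t ≠ 𝒰.inv r → r ≤ t → t ⊔ s₀ ∈ S

/-- `s₀` emulates `r` in `S` for a set `F` of stars. -/
def EmulatesFor (𝒰 : SepUniverse U) (S : Set U) (F : Set (Set U)) (s₀ r : U) : Prop :=
  Emulates 𝒰 S s₀ r ∧
    ∀ σ ∈ F, 𝒰.inv r ∉ σ → ∀ x ∈ σ, r ≤ x → shiftStar 𝒰 σ x s₀ ∈ F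

/-- `F` forces `s`. -/
def Forces (𝒰 : SepUniverse U) (F : Set (Set U)) (s : U) : Prop :=
  ({𝒰.inv s} : Set U) ∈ F

/-- `S` is `F`-separable. -/
def FSeparable (𝒰 : SepUniverse U) (S : Set U) (F : Set (Set U)) : Prop :=
  ∀ r₁ ∈ S, ∀ r₂ ∈ S,
    ¬ IsTrivialIn 𝒰 S r₁ → ¬ IsTrivialIn 𝒰 S r₂ →
    r₁ ≠ 𝒰.inv r₁ → r₂ ≠ 𝒰.inv r₂ →
    ¬ Forces 𝒰 F r₁ → ¬ Forces 𝒰 F r₂ →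
    r₁ ≤ 𝒰.inv r₂ →
    ∃ s₀ ∈ S, r₁ ≤ s₀ ∧ s₀ ≤ 𝒰.inv r₂ ∧
      EmulatesFor 𝒰 S F s₀ r₁ ∧ EmulatesFor 𝒰 S F (𝒰.inv s₀) r₂

/-- `r` is `F`-critical. -/
def FCritical (𝒰 : SepUniverse U) (F : Set (Set U)) (r : U) : Prop :=
  (∃ σ ∈ F, r ∈ σ) ∧
    ¬ ∃ σ' ∈ F, σ' ∩ ({r, 𝒰.inv r} : Set U) = ({𝒰.inv r} : Set U)

/-- `S` is critically `F`-separable. -/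
def CritFSeparable (𝒰 : SepUniverse U) (S : Set U) (F : Set (Set U)) : Prop :=
  ∀ r₁ ∈ S, ∀ r₂ ∈ S, FCritical 𝒰 F r₁ → FCritical 𝒰 F r₂ → r₁ ≤ 𝒰.inv r₂ →
    ∃ s₀ ∈ S, EmulatesFor 𝒰 S F s₀ r₁ ∧ EmulatesFor 𝒰 S F (𝒰.inv s₀) r₂

/-- An `F`-tangle of `S`: a consistent orientation including no member of `F`. -/
def FTangle (𝒰 : SepUniverse U) (S : Set U) (F : Set (Set U)) (O : Set U) : Prop :=
  IsOrientation 𝒰 S O ∧ Consistent 𝒰 O ∧ ∀ σ ∈ F, ¬ σ ⊆ O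

/-- `F` is standard for `S`: it forces all trivial separations of `S`. -/
def StandardFor (𝒰 : SepUniverse U) (S : Set U) (F : Set (Set U)) : Prop :=
  ∀ r ∈ S, IsTrivialIn 𝒰 S r → ({𝒰.inv r} : Set U) ∈ F

/-- An `S`-tree: a finite tree together with edge labels in `S` commuting with
the involution. -/
structure STree (𝒰 : SepUniverse U) (S : Set U) where
  V : Type
  fintypeV : Fintype V
  G : SimpleGraph V
  isTree : G.IsTree
  label : V → V → U
  label_mem : ∀ x y, G.Adj x y → label x y ∈ S
  label_inv : ∀ x y, G.Adj x y → label y x = 𝒰.inv (label x y)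

namespace STree

variable {𝒰 : SepUniverse U} {S : Set U}

/-- The star `α(t)` associated with a node `t`. -/
def nodeStar (T : STree 𝒰 S) (t : T.V) : Set U :=
  {u | ∃ s, T.G.Adj s t ∧ T.label s t = u}

/-- The `S`-tree is over `F`. -/
def Over (T : STree 𝒰 S) (F : Set (Set U)) : Prop :=
  ∀ t : T.V, T.nodeStar t ∈ F

/-- Irredundance of an `S`-tree. -/
def Irredundant (T : STree 𝒰 S) : Prop :=
  ∀ t t' t'' : T.V, T.G.Adj t' t → T.G.Adj t'' t → t' ≠ t'' →
    T.label t' t ≠ T.label t'' t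

/-- The set of edge labels of the tree. -/
def labels (T : STree 𝒰 S) : Set U :=
  {u | ∃ x y, T.G.Adj x y ∧ T.label x y = u}

/-- `t` is a sink of the orientation of the tree induced by `P`. -/
def IsSinkOf (T : STree 𝒰 S) (P : Set U) (t : T.V) : Prop :=
  ∀ s, T.G.Adj s t → T.label s t ∈ P

/-- The degree of a node. -/
noncomputable def deg (T : STree 𝒰 S) (t : T.V) : ℕ :=
  (T.G.neighborSet t).ncard

/-- The maximum degree of the tree. -/
noncomputable def maxDeg (T : STree 𝒰 S) : ℕ :=
  sSup {n | ∃ t : T.V, T.deg t = n}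

end STree

/-- A tree of tangles for `S`: an irredundant `S`-tree whose edge labels
distinguish every two distinct regular profiles of `S`. -/
def TreeOfTangles (𝒰 : SepUniverse U) (S : Set U) (T : STree 𝒰 S) : Prop :=
  T.Irredundant ∧
    ∀ P Q : Set U, IsProfile 𝒰 S P → Regular 𝒰 P → IsProfile 𝒰 S Q → Regular 𝒰 Q →
      P ≠ Q → ∃ s ∈ T.labels, Distinguishes 𝒰 s P Q

/-- `δ(P)`: the minimum size of a subset of `P` distinguishing `P` from every
other regular profile of `S`. -/
noncomputable def deltaP (𝒰 : SepUniverse U) (S P : Set U) : ℕ :=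
  sInf {n | ∃ D : Set U, D ⊆ P ∧ D.ncard = n ∧
    ∀ Q : Set U, IsProfile 𝒰 S Q → Regular 𝒰 Q → Q ≠ P →
      ∃ s ∈ D, Distinguishes 𝒰 s P Q}

/-- `S_k`: the separations of order less than `k`. -/
def Sk (𝒱 : SubmodUniverse U) (k : ℕ) : Set U := {s | 𝒱.ord s < k}

/-- `s` distinguishes `P` and `Q` efficiently. -/
def EffDistinguishes (𝒱 : SubmodUniverse U) (s : U) (P Q : Set U) : Prop :=
  Distinguishes 𝒱.toSepUniverse s P Q ∧
    ∀ t : U, Distinguishes 𝒱.toSepUniverse t P Q → 𝒱.ord s ≤ 𝒱.ord t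

/-- Property `Eff(P)` of a star `σ`. -/
def EffProp (𝒱 : SubmodUniverse U) (σ P : Set U) : Prop :=
  ¬ ∃ s ∈ σ, ∃ s' ∈ P, s ≤ s' ∧ 𝒱.ord s' < 𝒱.ord s

/-- `s` is a splice for `r`. -/
def SpliceFor (𝒱 : SubmodUniverse U) (s r : U) : Prop :=
  r ≤ s ∧ ¬ ∃ t : U, r ≤ t ∧ t ≤ s ∧ 𝒱.ord t < 𝒱.ord s

/-- `s` is a splice between `r₁` and `r₂`. -/
def SpliceBetween (𝒱 : SubmodUniverse U) (s r₁ r₂ : U) : Prop :=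
  r₁ ≤ s ∧ s ≤ r₂ ∧ ∀ t : U, r₁ ≤ t → t ≤ r₂ → 𝒱.ord s ≤ 𝒱.ord t

/-- The set `F_e` of stars in `S_k` included in at most one profile of `𝔓` and
satisfying `Eff(P)` whenever included in `P ∈ 𝔓`. -/
def Fe (𝒱 : SubmodUniverse U) (k : ℕ) (𝔓 : Set (Set U)) : Set (Set U) :=
  {σ | σ ⊆ Sk 𝒱 k ∧ IsStar 𝒱.toSepUniverse σ ∧
    (∀ P ∈ 𝔓, ∀ Q ∈ 𝔓, σ ⊆ P → σ ⊆ Q → P = Q) ∧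
    (∀ P ∈ 𝔓, σ ⊆ P → EffProp 𝒱 σ P)}

/-- `δ_e(P)`: the minimum size of a star `σ ⊆ P` with `Eff(P)` such that every
other regular profile of `S_k` contains the inverse of some element of `σ`. -/
noncomputable def deltaE (𝒱 : SubmodUniverse U) (k : ℕ) (P : Set U) : ℕ :=
  sInf {n | ∃ σ : Set U, σ ⊆ P ∧ IsStar 𝒱.toSepUniverse σ ∧ EffProp 𝒱 σ P ∧
    σ.ncard = n ∧
    ∀ Q : Set U, IsProfile 𝒱.toSepUniverse (Sk 𝒱 k) Q → Regular 𝒱.toSepUniverse Q →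
      Q ≠ P → ∃ s ∈ σ, 𝒱.inv s ∈ Q}

/-- `δ_{e,max}`: maximum of `δ_e` over all regular profiles of `S_k`. -/
noncomputable def deltaEMax (𝒱 : SubmodUniverse U) (k : ℕ) : ℕ :=
  sSup {n | ∃ P : Set U, IsProfile 𝒱.toSepUniverse (Sk 𝒱 k) P ∧
    Regular 𝒱.toSepUniverse P ∧ deltaE 𝒱 k P = n}

/-- `P` is a profile in `U`: a `k`-profile for some `k`. -/
def ProfileIn (𝒱 : SubmodUniverse U) (P : Set U) : Prop :=
  ∃ k : ℕ, IsProfile 𝒱.toSepUniverse (Sk 𝒱 k) P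

/-- Strong robustness of a profile. -/
def StronglyRobust (𝒱 : SubmodUniverse U) (P : Set U) : Prop :=
  ∀ s ∈ P, ∀ r : U, 𝒱.ord (s ⊔ r) ≤ 𝒱.ord s → 𝒱.ord (s ⊔ 𝒱.inv r) ≤ 𝒱.ord s →
    (s ⊔ r ∈ P ∨ s ⊔ 𝒱.inv r ∈ P)

/-- `O` weakly orients a separation as `s'` if `s' ≤ r` for some `r ∈ O`. -/
def WeaklyOrientsAs (O : Set U) (s' : U) : Prop :=
  ∃ r ∈ O, s' ≤ r

/-- `O` weakly orients `s` (as `s` or as `s*`). -/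
def WeaklyOrients (𝒰 : SepUniverse U) (O : Set U) (s : U) : Prop :=
  WeaklyOrientsAs O s ∨ WeaklyOrientsAs O (𝒰.inv s)

/-- The set `F_d` of stars, relative to the set of profiles `𝔓`. -/
def Fd (𝒱 : SubmodUniverse U) (𝔓 : Set (Set U)) : Set (Set U) :=
  {σ | IsStar 𝒱.toSepUniverse σ ∧
    (∀ P ∈ 𝔓, ∀ Q ∈ 𝔓, σ ⊆ P → σ ⊆ Q → P = Q) ∧
    (∀ P ∈ 𝔓, ¬ σ ⊆ P → ∃ s ∈ σ, WeaklyOrientsAs P (𝒱.inv s)) ∧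
    (∀ P ∈ 𝔓, σ ⊆ P → EffProp 𝒱 σ P)}

namespace SepUniverse

variable (𝒰 : SepUniverse U) {a b : U}

theorem inv_le_inv : 𝒰.inv a ≤ 𝒰.inv b ↔ b ≤ a := (𝒰.le_iff b a).symm

theorem le_inv_comm : a ≤ 𝒰.inv b ↔ b ≤ 𝒰.inv a := by
  rw [← 𝒰.inv_le_inv, 𝒰.inv_inv]

theorem inv_le_comm : 𝒰.inv a ≤ b ↔ 𝒰.inv b ≤ a := by
  rw [← 𝒰.inv_le_inv, 𝒰.inv_inv]

theorem inv_inf (a b : U) : 𝒰.inv (a ⊓ b) = 𝒰.inv a ⊔ 𝒰.inv b :=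
  le_antisymm
    ((𝒰.inv_le_comm).mpr <| le_inf ((𝒰.inv_le_comm).mp le_sup_left)
      ((𝒰.inv_le_comm).mp le_sup_right))
    (sup_le ((𝒰.inv_le_inv).mpr inf_le_left) ((𝒰.inv_le_inv).mpr inf_le_right))

end SepUniverse

section Nested

variable {𝒰 : SepUniverse U} {r s t : U}

theorem nested_of_le (h : r ≤ s) : Nested 𝒰 r s := Or.inl h

theorem Nested.symm (h : Nested 𝒰 r s) : Nested 𝒰 s r := by
  rcases h with h | h | h | h
  · exact Or.inr (Or.inr (Or.inr ((𝒰.inv_le_inv).mpr h)))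
  · exact Or.inr (Or.inl ((𝒰.le_inv_comm).mp h))
  · exact Or.inr (Or.inr (Or.inl ((𝒰.inv_le_comm).mp h)))
  · exact Or.inl ((𝒰.inv_le_inv).mp h)

@[simp]
theorem nested_inv_right : Nested 𝒰 r (𝒰.inv s) ↔ Nested 𝒰 r s := by
  unfold Nested
  rw [𝒰.inv_inv]
  tauto

theorem nested_of_mem_pair {r' : U} (hr' : r' ∈ ({r, 𝒰.inv r} : Set U)) :
    Nested 𝒰 t r' ↔ Nested 𝒰 t r := by
  rcases hr' with rfl | rfl
  exacts [Iff.rfl, nested_inv_right]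

theorem Nested.sup (hrs : ¬ Nested 𝒰 r s) (htr : Nested 𝒰 t r) (hts : Nested 𝒰 t s) :
    Nested 𝒰 t (r ⊔ s) := by
  rcases htr with h₁ | h₁ | h₁ | h₁
  · exact Or.inl (le_sup_of_le_left h₁)
  · rcases hts with h₂ | h₂ | h₂ | h₂
    · exact Or.inl (le_sup_of_le_right h₂)
    · exact Or.inr (Or.inl ((𝒰.le_inv_comm).mpr
        (sup_le ((𝒰.le_inv_comm).mp h₁) ((𝒰.le_inv_comm).mp h₂))))
    · exact Or.inr (Or.inr (Or.inl (le_sup_of_le_right h₂)))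
    · exact (hrs (Or.inr (Or.inl ((𝒰.le_inv_comm).mp (((𝒰.inv_le_inv).mp h₂).trans h₁))))).elim
  · exact Or.inr (Or.inr (Or.inl (le_sup_of_le_left h₁)))
  · rcases hts with h₂ | h₂ | h₂ | h₂
    · exact Or.inl (le_sup_of_le_right h₂)
    · exact (hrs (Or.inr (Or.inl (((𝒰.inv_le_inv).mp h₁).trans h₂)))).elim
    · exact Or.inr (Or.inr (Or.inl (le_sup_of_le_right h₂)))
    · exact Or.inr (Or.inr (Or.inr ((𝒰.inv_le_inv).mpr
        (sup_le ((𝒰.inv_le_inv).mp h₁) ((𝒰.inv_le_inv).mp h₂)))))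

end Nested

/-- Corners are taken up to inversion: the meet `r ⊓ s` is represented by the join `r* ⊔ s*`. -/
def IsCorner (𝒰 : SepUniverse U) (r s c : U) : Prop :=
  ∃ r' ∈ ({r, 𝒰.inv r} : Set U), ∃ s' ∈ ({s, 𝒰.inv s} : Set U), c = r' ⊔ s'

namespace IsCorner

variable {𝒰 : SepUniverse U} {r s t c : U}

theorem nested_left (hc : IsCorner 𝒰 r s c) : Nested 𝒰 c r := by
  obtain ⟨r', hr', s', -, rfl⟩ := hc
  exact (nested_of_mem_pair hr').mp (nested_of_le le_sup_left).symm

theorem nested_right (hc : IsCorner 𝒰 r s c) : Nested 𝒰 c s := by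
  obtain ⟨r', -, s', hs', rfl⟩ := hc
  exact (nested_of_mem_pair hs').mp (nested_of_le le_sup_right).symm

/-- The fish lemma. -/
theorem nested_of_nested (hc : IsCorner 𝒰 r s c) (hrs : ¬ Nested 𝒰 r s)
    (htr : Nested 𝒰 t r) (hts : Nested 𝒰 t s) : Nested 𝒰 t c := by
  obtain ⟨r', hr', s', hs', rfl⟩ := hc
  refine Nested.sup (fun h => hrs ?_) ((nested_of_mem_pair hr').mpr htr)
    ((nested_of_mem_pair hs').mpr hts)
  exact ((nested_of_mem_pair hr').mp ((nested_of_mem_pair hs').mp h).symm).symm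

end IsCorner

@[simp]
theorem isCorner_inv_left {𝒰 : SepUniverse U} {r s c : U} :
    IsCorner 𝒰 (𝒰.inv r) s c ↔ IsCorner 𝒰 r s c := by
  simp only [IsCorner, 𝒰.inv_inv, Set.pair_comm]

@[simp]
theorem isCorner_inv_right {𝒰 : SepUniverse U} {r s c : U} :
    IsCorner 𝒰 r (𝒰.inv s) c ↔ IsCorner 𝒰 r s c := by
  simp only [IsCorner, 𝒰.inv_inv, Set.pair_comm]

def IsRegularProfile (𝒰 : SepUniverse U) (S P : Set U) : Prop :=
  IsProfile 𝒰 S P ∧ Regular 𝒰 P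

section Profiles

variable {𝒰 : SepUniverse U} {S P Q : Set U} {a b c r s : U}

theorem IsOrientation.mem_or_inv_mem (hP : IsOrientation 𝒰 S P) (ha : a ∈ S) :
    a ∈ P ∨ 𝒰.inv a ∈ P :=
  (hP.2 a ha).1

theorem IsProfile.sup_mem (hP : IsProfile 𝒰 S P) (ha : a ∈ P) (hb : b ∈ P) (hab : a ⊔ b ∈ S) :
    a ⊔ b ∈ P :=
  (hP.1.mem_or_inv_mem hab).resolve_right (hP.2.2 a ha b hb)

theorem IsRegularProfile.mem_of_le (hP : IsRegularProfile 𝒰 S P) (ha : a ∈ P) (hc : c ∈ S)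
    (hca : c ≤ a) : c ∈ P := by
  obtain ⟨⟨hO, hcons, -⟩, hreg⟩ := hP
  refine (hO.mem_or_inv_mem hc).resolve_right fun hc' => ?_
  by_cases hpair : ({𝒰.inv c, 𝒰.inv (𝒰.inv c)} : Set U) = {a, 𝒰.inv a}
  · rw [𝒰.inv_inv, Set.pair_eq_pair_iff] at hpair
    rcases hpair with ⟨rfl, -⟩ | ⟨-, rfl⟩
    · exact hreg _ hc' (by rwa [𝒰.inv_inv])
    · exact hreg c ha ((hO.2 c hc).2 ha hc').ge
  · exact hcons _ hc' a ha hpair (by rwa [𝒰.inv_inv])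

theorem Distinguishes.symm (h : Distinguishes 𝒰 s P Q) : Distinguishes 𝒰 s Q P :=
  (Or.symm h).imp And.symm And.symm

@[simp]
theorem distinguishes_inv : Distinguishes 𝒰 (𝒰.inv s) P Q ↔ Distinguishes 𝒰 s P Q := by
  unfold Distinguishes
  rw [𝒰.inv_inv]
  exact Or.comm

theorem exists_distinguishes_of_ne (hP : IsOrientation 𝒰 S P) (hQ : IsOrientation 𝒰 S Q)
    (hPQ : P ≠ Q) : ∃ s ∈ S, Distinguishes 𝒰 s P Q := by
  by_contra! h
  refine hPQ (Set.ext fun x => ⟨fun hx => ?_, fun hx => ?_⟩)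
  · exact (hQ.mem_or_inv_mem (hP.1 hx)).resolve_right fun hx' => h x (hP.1 hx) (Or.inl ⟨hx, hx'⟩)
  · exact (hP.mem_or_inv_mem (hQ.1 hx)).resolve_right fun hx' => h x (hQ.1 hx) (Or.inr ⟨hx', hx⟩)

theorem distinguishes_sup_of_mem (hS : SepSystem 𝒰 S) (hP : IsProfile 𝒰 S P)
    (hQ : IsRegularProfile 𝒰 S Q) (ha : a ∈ P) (hb : b ∈ P) (ha' : 𝒰.inv a ∈ Q)
    (hab : a ⊔ b ∈ S) : Distinguishes 𝒰 (a ⊔ b) P Q :=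
  Or.inl ⟨hP.sup_mem ha hb hab, hQ.mem_of_le ha' (hS _ hab) ((𝒰.inv_le_inv).mpr le_sup_left)⟩

theorem StructSubmodular.sup_mem_or_inv_sup_inv_mem (hsub : StructSubmodular S)
    (hS : SepSystem 𝒰 S) (ha : a ∈ S) (hb : b ∈ S) : a ⊔ b ∈ S ∨ 𝒰.inv a ⊔ 𝒰.inv b ∈ S :=
  (hsub a ha b hb).imp id fun h => 𝒰.inv_inf a b ▸ hS _ h

end Profiles

section Corners

variable {𝒰 : SepUniverse U} {S P₁ Q₁ P₂ Q₂ : Set U} {r s : U}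

theorem exists_corner_distinguishes_of_mem (hS : SepSystem 𝒰 S) (hsub : StructSubmodular S)
    (hP₁ : IsRegularProfile 𝒰 S P₁) (hQ₁ : IsRegularProfile 𝒰 S Q₁)
    (hP₂ : IsRegularProfile 𝒰 S P₂) (hQ₂ : IsRegularProfile 𝒰 S Q₂)
    (hr : r ∈ P₁) (hr' : 𝒰.inv r ∈ Q₁) (hs₁ : s ∈ P₁) (hs : s ∈ P₂) (hs' : 𝒰.inv s ∈ Q₂) :
    ∃ c ∈ S, IsCorner 𝒰 r s c ∧ (Distinguishes 𝒰 c P₁ Q₁ ∨ Distinguishes 𝒰 c P₂ Q₂) := by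
  have hrS : r ∈ S := hP₁.1.1.1 hr
  have hsS : s ∈ S := hP₂.1.1.1 hs
  have hr'' : 𝒰.inv (𝒰.inv r) ∈ P₁ := by rwa [𝒰.inv_inv]
  have hs'' : 𝒰.inv (𝒰.inv s) ∈ P₂ := by rwa [𝒰.inv_inv]
  rcases hsub.sup_mem_or_inv_sup_inv_mem hS hrS hsS with h | h
  · exact ⟨_, h, by simp [IsCorner], Or.inl (distinguishes_sup_of_mem hS hP₁.1 hQ₁ hr hs₁ hr' h)⟩
  rcases hQ₂.1.1.mem_or_inv_mem hrS with hrQ₂ | hrQ₂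
  swap
  · rw [sup_comm] at h
    exact ⟨_, h, by simp [IsCorner, sup_comm],
      Or.inr (distinguishes_sup_of_mem hS hQ₂.1 hP₂ hs' hrQ₂ hs'' h).symm⟩
  rcases hQ₁.1.1.mem_or_inv_mem hsS with hsQ₁ | hsQ₁
  swap
  · exact ⟨_, h, by simp [IsCorner],
      Or.inl (distinguishes_sup_of_mem hS hQ₁.1 hP₁ hr' hsQ₁ hr'' h).symm⟩
  -- Now `r ∈ Q₂` and `s ∈ Q₁`: either corner of the other opposite pair distinguishes a pair.
  rcases hsub.sup_mem_or_inv_sup_inv_mem hS hrS (hS s hsS) with h' | h'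
  · rw [sup_comm] at h'
    exact ⟨_, h', by simp [IsCorner, sup_comm],
      Or.inr (distinguishes_sup_of_mem hS hQ₂.1 hP₂ hs' hrQ₂ hs'' h').symm⟩
  · rw [𝒰.inv_inv] at h'
    exact ⟨_, h', by simp [IsCorner],
      Or.inl (distinguishes_sup_of_mem hS hQ₁.1 hP₁ hr' hsQ₁ hr'' h').symm⟩

theorem exists_corner_distinguishes (hS : SepSystem 𝒰 S) (hsub : StructSubmodular S)
    (hP₁ : IsRegularProfile 𝒰 S P₁) (hQ₁ : IsRegularProfile 𝒰 S Q₁)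
    (hP₂ : IsRegularProfile 𝒰 S P₂) (hQ₂ : IsRegularProfile 𝒰 S Q₂)
    (h₁ : Distinguishes 𝒰 r P₁ Q₁) (h₂ : Distinguishes 𝒰 s P₂ Q₂) :
    ∃ c ∈ S, IsCorner 𝒰 r s c ∧ (Distinguishes 𝒰 c P₁ Q₁ ∨ Distinguishes 𝒰 c P₂ Q₂) := by
  wlog hr : r ∈ P₁ ∧ 𝒰.inv r ∈ Q₁ generalizing r
  · have hr' : 𝒰.inv r ∈ P₁ ∧ 𝒰.inv (𝒰.inv r) ∈ Q₁ := by
      rw [𝒰.inv_inv]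
      exact h₁.resolve_left hr
    simpa using this (distinguishes_inv.mpr h₁) hr'
  wlog hs : s ∈ P₂ ∧ 𝒰.inv s ∈ Q₂ generalizing s
  · have hs' : 𝒰.inv s ∈ P₂ ∧ 𝒰.inv (𝒰.inv s) ∈ Q₂ := by
      rw [𝒰.inv_inv]
      exact h₂.resolve_left hs
    simpa using this (distinguishes_inv.mpr h₂) hs'
  wlog hs₁ : s ∈ P₁ generalizing s P₂ Q₂
  · have hs₁' : 𝒰.inv s ∈ P₁ := (hP₁.1.1.mem_or_inv_mem (hP₂.1.1.1 hs.1)).resolve_left hs₁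
    obtain ⟨c, hcS, hc, hd⟩ := this hQ₂ hP₂ (distinguishes_inv.mpr h₂.symm)
      ⟨hs.2, by rw [𝒰.inv_inv]; exact hs.1⟩ hs₁'
    exact ⟨c, hcS, isCorner_inv_right.mp hc, hd.imp id Distinguishes.symm⟩
  exact exists_corner_distinguishes_of_mem hS hsub hP₁ hQ₁ hP₂ hQ₂ hr.1 hr.2 hs₁ hs.1 hs.2

end Corners

theorem NestedSet.insert {𝒰 : SepUniverse U} {N : Set U} {a : U} (hN : NestedSet 𝒰 N)
    (ha : ∀ x ∈ N, Nested 𝒰 a x) : NestedSet 𝒰 (insert a N) := by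
  rintro x (rfl | hx) y (rfl | hy)
  · exact nested_of_le le_rfl
  · exact ha y hy
  · exact (ha x hx).symm
  · exact hN x hx y hy

theorem ncard_crossing_lt_of_isCorner {𝒰 : SepUniverse U} {N : Set U} {y a c : U}
    (hN : NestedSet 𝒰 N) (hy : y ∈ N) (hya : ¬ Nested 𝒰 y a) (hc : IsCorner 𝒰 y a c) :
    {z ∈ N | ¬ Nested 𝒰 z c}.ncard < {z ∈ N | ¬ Nested 𝒰 z a}.ncard := by
  refine Set.ncard_lt_ncard ⟨fun z ⟨hz, hzc⟩ => ⟨hz, fun hza => ?_⟩, fun h => ?_⟩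
  · exact hzc (hc.nested_of_nested hya (hN z hz y hy) hza)
  · exact (h ⟨hy, hya⟩).2 hc.nested_left.symm

section Splinter

variable {ι : Type*}

/-- The splinter property of Elbracht, Kneip and Teegen. -/
def Splinters (𝒰 : SepUniverse U) (I : Set ι) (A : ι → Set U) : Prop :=
  ∀ i ∈ I, ∀ j ∈ I, ∀ x ∈ A i, ∀ y ∈ A j, ¬ Nested 𝒰 x y →
    ∃ c, IsCorner 𝒰 x y c ∧ (c ∈ A i ∨ c ∈ A j)

namespace Splinters

open Set

variable {𝒰 : SepUniverse U} {I J : Set ι} {A : ι → Set U}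

theorem mono (h : Splinters 𝒰 I A) (hJ : J ⊆ I) : Splinters 𝒰 J A :=
  fun i hi j hj => h i (hJ hi) j (hJ hj)

theorem restrict_nested (h : Splinters 𝒰 I A) (a : U) :
    Splinters 𝒰 I (fun i => {x ∈ A i | Nested 𝒰 a x}) := by
  intro i hi j hj x hx y hy hxy
  obtain ⟨c, hc, hcA⟩ := h i hi j hj x hx.1 y hy.1 hxy
  have hac : Nested 𝒰 a c := hc.nested_of_nested hxy hx.2 hy.2
  exact ⟨c, hc, hcA.imp (⟨·, hac⟩) (⟨·, hac⟩)⟩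

/-- Choosing `a` to cross as few members of `N` as possible works: if all of some `A i` crossed
`a`, the corner of `a` with the representative of `A i` in `N` would be a better choice. -/
theorem exists_nested_forall {i₀ : ι} (hA : Splinters 𝒰 (insert i₀ I) A)
    (hne : (A i₀).Nonempty) {N : Set U} (hN : NestedSet 𝒰 N)
    (hNA : ∀ i ∈ I, (A i ∩ N).Nonempty) :
    ∃ a ∈ A i₀, ∀ i ∈ I, ∃ x ∈ A i, Nested 𝒰 a x := by
  obtain ⟨a, ha, hmin⟩ := exists_min_image (A i₀)
    (fun a => {z ∈ N | ¬ Nested 𝒰 z a}.ncard) (toFinite _) hne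
  refine ⟨a, ha, fun k hk => ?_⟩
  by_contra! hcross
  obtain ⟨y, hyA, hyN⟩ := hNA k hk
  have hya : ¬ Nested 𝒰 y a := fun h => hcross y hyA h.symm
  obtain ⟨c, hc, hcA | hcA⟩ :=
    hA k (mem_insert_of_mem _ hk) i₀ (mem_insert _ _) y hyA a ha hya
  · exact hcross c hcA hc.nested_right.symm
  · exact (hmin c hcA).not_gt (ncard_crossing_lt_of_isCorner hN hyN hya hc)

/-- The splinter lemma. -/
theorem exists_nestedSet (hI : I.Finite) (hA : Splinters 𝒰 I A)
    (hne : ∀ i ∈ I, (A i).Nonempty) :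
    ∃ N ⊆ ⋃ i ∈ I, A i, NestedSet 𝒰 N ∧ ∀ i ∈ I, (A i ∩ N).Nonempty := by
  induction I, hI using Set.Finite.induction_on generalizing A with
  | empty => exact ⟨∅, empty_subset _, fun _ h => h.elim, fun _ h => h.elim⟩
  | @insert i₀ I _ _ ih =>
    obtain ⟨N₀, -, hN₀, hN₀A⟩ :=
      ih (hA.mono (subset_insert _ _)) fun i hi => hne i (mem_insert_of_mem _ hi)
    obtain ⟨a, ha, haA⟩ := hA.exists_nested_forall (hne i₀ (mem_insert _ _)) hN₀ hN₀A
    obtain ⟨N, hNA, hN, hAN⟩ := ih ((hA.restrict_nested a).mono (subset_insert _ _)) haA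
    have haN : ∀ x ∈ N, Nested 𝒰 a x := fun x hx => by
      obtain ⟨i, -, hxi⟩ := mem_iUnion₂.mp (hNA hx)
      exact hxi.2
    refine ⟨insert a N, ?_, hN.insert haN, ?_⟩
    · refine insert_subset (mem_biUnion (mem_insert _ _) ha) (hNA.trans ?_)
      exact biUnion_mono (subset_insert _ _) fun i _ => sep_subset _ _
    · rintro i (rfl | hi)
      · exact ⟨a, ha, mem_insert _ _⟩
      · obtain ⟨x, hx, hxN⟩ := hAN i hi
        exact ⟨x, hx.1, mem_insert_of_mem _ hxN⟩

end Splinters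

end Splinter

/-- In any universe of separations, for every structurally
submodular separation system `S` there is a nested set `N ⊆ S` distinguishing
any two distinct regular profiles of `S`. -/
theorem tree_of_tangles_regular (𝒰 : SepUniverse U) (S : Set U)
    (hS : SepSystem 𝒰 S) (hsub : StructSubmodular S) :
    ∃ N : Set U, N ⊆ S ∧ NestedSet 𝒰 N ∧
      ∀ P Q : Set U, IsProfile 𝒰 S P → Regular 𝒰 P →
        IsProfile 𝒰 S Q → Regular 𝒰 Q → P ≠ Q →
        ∃ s ∈ N, Distinguishes 𝒰 s P Q := by
  let I : Set (Set U × Set U) :=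
    {PQ | IsRegularProfile 𝒰 S PQ.1 ∧ IsRegularProfile 𝒰 S PQ.2 ∧ PQ.1 ≠ PQ.2}
  let A (PQ : Set U × Set U) : Set U := {s ∈ S | Distinguishes 𝒰 s PQ.1 PQ.2}
  have hA : Splinters 𝒰 I A := by
    rintro ⟨P₁, Q₁⟩ ⟨hP₁, hQ₁, -⟩ ⟨P₂, Q₂⟩ ⟨hP₂, hQ₂, -⟩ r ⟨-, hr⟩ s ⟨-, hs⟩ -
    obtain ⟨c, hcS, hc, hd⟩ := exists_corner_distinguishes hS hsub hP₁ hQ₁ hP₂ hQ₂ hr hs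
    exact ⟨c, hc, hd.imp (⟨hcS, ·⟩) (⟨hcS, ·⟩)⟩
  have hne : ∀ PQ ∈ I, (A PQ).Nonempty := fun _ ⟨hP, hQ, hPQ⟩ =>
    exists_distinguishes_of_ne hP.1.1 hQ.1.1 hPQ
  obtain ⟨N, hNA, hN, hAN⟩ := hA.exists_nestedSet (Set.toFinite I) hne
  refine ⟨N, hNA.trans (Set.iUnion₂_subset fun _ _ => Set.sep_subset _ _), hN,
    fun P Q hP hPreg hQ hQreg hPQ => ?_⟩
  obtain ⟨s, ⟨-, hs⟩, hsN⟩ := hAN (P, Q) ⟨⟨hP, hPreg⟩, ⟨hQ, hQreg⟩, hPQ⟩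
  exact ⟨s, hsN, hs⟩

end SepDemo
end

section
/- Let U be a universe of separations, S ⊆ U a structurally submodular separation system, and P a profile of S. Then there exists a star σ ⊆ P such that no profile of S other than P includes σ. -/
namespace SepDemo

variable {U : Type*} [Lattice U] [Fintype U]

attribute [local instance] Classical.propDecidable

private lemma inv_antitone (𝒰 : SepUniverse U) {a b : U} (h : a ≤ b) :
    𝒰.inv b ≤ 𝒰.inv a := (𝒰.le_iff a b).mp h

private lemma inv_sup_eq (𝒰 : SepUniverse U) (a b : U) :
    𝒰.inv (a ⊔ b) = 𝒰.inv a ⊓ 𝒰.inv b := by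
  apply le_antisymm
  · exact le_inf (inv_antitone 𝒰 le_sup_left) (inv_antitone 𝒰 le_sup_right)
  · have ha : a ≤ 𝒰.inv (𝒰.inv a ⊓ 𝒰.inv b) := by
      rw [𝒰.le_iff a (𝒰.inv (𝒰.inv a ⊓ 𝒰.inv b)), 𝒰.inv_inv]
      exact inf_le_left
    have hb : b ≤ 𝒰.inv (𝒰.inv a ⊓ 𝒰.inv b) := by
      rw [𝒰.le_iff b (𝒰.inv (𝒰.inv a ⊓ 𝒰.inv b)), 𝒰.inv_inv]
      exact inf_le_right
    have h := (𝒰.le_iff (a ⊔ b) (𝒰.inv (𝒰.inv a ⊓ 𝒰.inv b))).mp (sup_le ha hb)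
    rwa [𝒰.inv_inv] at h

private lemma pair_ne (𝒰 : SepUniverse U) {a b : U} (h1 : b ≠ a) (h2 : b ≠ 𝒰.inv a) :
    ({a, 𝒰.inv a} : Set U) ≠ ({b, 𝒰.inv b} : Set U) := by
  intro h
  have hb : b ∈ ({a, 𝒰.inv a} : Set U) := by
    rw [h]; exact Set.mem_insert _ _
  simp only [Set.mem_insert_iff, Set.mem_singleton_iff] at hb
  rcases hb with hb | hb
  · exact h1 hb
  · exact h2 hb

/-- The corner `x ⊓ y*` of two crossing members of a profile lies in the profile. -/
private lemma corner_mem (𝒰 : SepUniverse U) {S P : Set U} (hP : IsProfile 𝒰 S P)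
    {x y : U} (hxP : x ∈ P) (hyP : y ∈ P) (h1 : ¬ x ≤ 𝒰.inv y) (h2 : ¬ y ≤ x)
    (hvS : x ⊓ 𝒰.inv y ∈ S) : x ⊓ 𝒰.inv y ∈ P := by
  rcases (hP.1.2 _ hvS).1 with h | h
  · exact h
  · exfalso
    have hne1 : 𝒰.inv (x ⊓ 𝒰.inv y) ≠ x := by
      intro he
      have hv : x ⊓ 𝒰.inv y = 𝒰.inv x := by rw [← 𝒰.inv_inv (x ⊓ 𝒰.inv y), he]
      have hxy' : 𝒰.inv x ≤ 𝒰.inv y := by rw [← hv]; exact inf_le_right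
      exact h2 ((𝒰.le_iff y x).mpr hxy')
    have hne2 : 𝒰.inv (x ⊓ 𝒰.inv y) ≠ 𝒰.inv x := by
      intro he
      have hv : x ⊓ 𝒰.inv y = x := by
        rw [← 𝒰.inv_inv (x ⊓ 𝒰.inv y), he, 𝒰.inv_inv]
      apply h1
      rw [← hv]; exact inf_le_right
    have hle : 𝒰.inv x ≤ 𝒰.inv (x ⊓ 𝒰.inv y) := inv_antitone 𝒰 inf_le_left
    exact hP.2.1 x hxP (𝒰.inv (x ⊓ 𝒰.inv y)) h (pair_ne 𝒰 hne1 hne2) hle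

private noncomputable def downN (d : U) : ℕ :=
  (Finset.univ.filter (fun z : U => z ≤ d)).card

private lemma downN_pos (d : U) : 0 < downN d :=
  Finset.card_pos.mpr ⟨d, Finset.mem_filter.mpr ⟨Finset.mem_univ _, le_rfl⟩⟩

private lemma downN_lt {v x : U} (h1 : v ≤ x) (h2 : v ≠ x) : downN v < downN x := by
  apply Finset.card_lt_card
  rw [Finset.ssubset_iff_of_subset]
  · exact ⟨x, Finset.mem_filter.mpr ⟨Finset.mem_univ _, le_rfl⟩,
      fun hc => h2 (le_antisymm h1 (Finset.mem_filter.mp hc).2)⟩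
  · intro z hz
    exact Finset.mem_filter.mpr
      ⟨Finset.mem_univ _, le_trans (Finset.mem_filter.mp hz).2 h1⟩

private noncomputable def muF (D : Finset U) : ℕ := ∑ d ∈ D, downN d

/-- Every profile `P` of a structurally submodular separation
system includes a star included in no other profile. -/
theorem profile_star (𝒰 : SepUniverse U) (S : Set U)
    (hS : SepSystem 𝒰 S) (hsub : StructSubmodular S)
    (P : Set U) (hP : IsProfile 𝒰 S P) :
    ∃ σ : Set U, σ ⊆ P ∧ IsStar 𝒰 σ ∧
      ∀ Q : Set U, IsProfile 𝒰 S Q → Q ≠ P → ¬ σ ⊆ Q := by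
  classical
  -- P itself is included in no other profile
  have hPdist : ∀ Q : Set U, IsProfile 𝒰 S Q → Q ≠ P → ¬ P ⊆ Q := by
    intro Q hQ hne hsubPQ
    apply hne
    apply Set.Subset.antisymm _ hsubPQ
    intro q hqQ
    rcases (hP.1.2 q (hQ.1.1 hqQ)).1 with h | h
    · exact h
    · have hinvqQ : 𝒰.inv q ∈ Q := hsubPQ h
      have hqd : q = 𝒰.inv q := (hQ.1.2 q (hQ.1.1 hqQ)).2 hqQ hinvqQ
      rw [hqd]; exact h
  -- main induction on the measure
  have key : ∀ (n : ℕ) (D : Finset U), muF D < n → (↑D : Set U) ⊆ P →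
      (∀ Q : Set U, IsProfile 𝒰 S Q → Q ≠ P → ∃ d ∈ D, d ∉ Q) →
      ∃ σ : Set U, σ ⊆ P ∧ IsStar 𝒰 σ ∧
        ∀ Q : Set U, IsProfile 𝒰 S Q → Q ≠ P → ¬ σ ⊆ Q := by
    intro n
    induction n with
    | zero => intro D h _ _; exact absurd h (Nat.not_lt_zero _)
    | succ n ih =>
      intro D hmu hDP hDdist
      by_cases hstar : IsStar 𝒰 (↑D : Set U)
      · refine ⟨↑D, hDP, hstar, ?_⟩
        intro Q hQ hne hsub'
        obtain ⟨d, hdD, hdQ⟩ := hDdist Q hQ hne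
        exact hdQ (hsub' (Finset.mem_coe.mpr hdD))
      · simp only [IsStar] at hstar
        push_neg at hstar
        obtain ⟨x, hxDc, y, hyDc, hxy, hnle⟩ := hstar
        have hxD : x ∈ D := Finset.mem_coe.mp hxDc
        have hyD : y ∈ D := Finset.mem_coe.mp hyDc
        have hxP : x ∈ P := hDP hxDc
        have hyP : y ∈ P := hDP hyDc
        have hxS : x ∈ S := hP.1.1 hxP
        have hyS : y ∈ S := hP.1.1 hyP
        have hyx_ne : y ≠ x := fun h => hxy h.symm
        have hy_ne_invx : y ≠ 𝒰.inv x := by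
          intro h; apply hnle; rw [h, 𝒰.inv_inv]
        have hx_ne_invy : x ≠ 𝒰.inv y := fun h => hnle (le_of_eq h)
        by_cases hxley : x ≤ y
        · -- comparable: delete x
          refine ih (D.erase x) ?_ ?_ ?_
          · have h1 : muF (D.erase x) + downN x = muF D :=
              Finset.sum_erase_add _ _ hxD
            have h2 : 0 < downN x := downN_pos x
            omega
          · intro a ha
            exact hDP (Finset.mem_coe.mpr
              (Finset.mem_of_mem_erase (Finset.mem_coe.mp ha)))
          · intro Q hQ hne
            obtain ⟨d, hdD, hdQ⟩ := hDdist Q hQ hne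
            by_cases hdx : d = x
            · subst hdx
              have hinvd : 𝒰.inv d ∈ Q := ((hQ.1.2 d hxS).1).resolve_left hdQ
              refine ⟨y, Finset.mem_erase.mpr ⟨hyx_ne, hyD⟩, ?_⟩
              intro hyQ
              have hpair : ({𝒰.inv d, 𝒰.inv (𝒰.inv d)} : Set U) ≠
                  ({y, 𝒰.inv y} : Set U) :=
                pair_ne 𝒰 hy_ne_invx (by rw [𝒰.inv_inv]; exact hyx_ne)
              apply hQ.2.1 (𝒰.inv d) hinvd y hyQ hpair
              rw [𝒰.inv_inv]; exact hxley
            · exact ⟨d, Finset.mem_erase.mpr ⟨hdx, hdD⟩, hdQ⟩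
        · by_cases hylex : y ≤ x
          · -- comparable: delete y
            refine ih (D.erase y) ?_ ?_ ?_
            · have h1 : muF (D.erase y) + downN y = muF D :=
                Finset.sum_erase_add _ _ hyD
              have h2 : 0 < downN y := downN_pos y
              omega
            · intro a ha
              exact hDP (Finset.mem_coe.mpr
                (Finset.mem_of_mem_erase (Finset.mem_coe.mp ha)))
            · intro Q hQ hne
              obtain ⟨d, hdD, hdQ⟩ := hDdist Q hQ hne
              by_cases hdy : d = y
              · subst hdy
                have hinvd : 𝒰.inv d ∈ Q := ((hQ.1.2 d hyS).1).resolve_left hdQ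
                refine ⟨x, Finset.mem_erase.mpr ⟨hxy, hxD⟩, ?_⟩
                intro hxQ
                have hpair : ({𝒰.inv d, 𝒰.inv (𝒰.inv d)} : Set U) ≠
                    ({x, 𝒰.inv x} : Set U) :=
                  pair_ne 𝒰 hx_ne_invy (by rw [𝒰.inv_inv]; exact hxy)
                apply hQ.2.1 (𝒰.inv d) hinvd x hxQ hpair
                rw [𝒰.inv_inv]; exact hylex
              · exact ⟨d, Finset.mem_erase.mpr ⟨hdy, hdD⟩, hdQ⟩
          · -- crossing: uncross via a corner
            have hnley : ¬ y ≤ 𝒰.inv x := by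
              intro h
              apply hnle
              have h' := (𝒰.le_iff y (𝒰.inv x)).mp h
              rwa [𝒰.inv_inv] at h'
            rcases hsub x hxS (𝒰.inv y) (hS y hyS) with hjoin | hmeet
            · -- x ⊔ y* ∈ S : replace y by the corner y ⊓ x*
              have hwS : y ⊓ 𝒰.inv x ∈ S := by
                have h1 : 𝒰.inv (x ⊔ 𝒰.inv y) ∈ S := hS _ hjoin
                rw [inv_sup_eq, 𝒰.inv_inv] at h1
                rwa [inf_comm] at h1
              have hwP : y ⊓ 𝒰.inv x ∈ P :=
                corner_mem 𝒰 hP hyP hxP hnley hxley hwS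
              have hwley : y ⊓ 𝒰.inv x ≤ y := inf_le_left
              have hwney : y ⊓ 𝒰.inv x ≠ y := by
                intro h; apply hnley; rw [← h]; exact inf_le_right
              refine ih (insert (y ⊓ 𝒰.inv x) (D.erase y)) ?_ ?_ ?_
              · have h1 : muF (D.erase y) + downN y = muF D :=
                  Finset.sum_erase_add _ _ hyD
                have hlt : downN (y ⊓ 𝒰.inv x) < downN y := downN_lt hwley hwney
                by_cases hmem : (y ⊓ 𝒰.inv x) ∈ D.erase y
                · rw [Finset.insert_eq_self.mpr hmem]
                  omega
                · have h2 : muF (insert (y ⊓ 𝒰.inv x) (D.erase y)) =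
                      downN (y ⊓ 𝒰.inv x) + muF (D.erase y) :=
                    Finset.sum_insert hmem
                  omega
              · intro a ha
                rcases Finset.mem_insert.mp (Finset.mem_coe.mp ha) with h | h
                · rw [h]; exact hwP
                · exact hDP (Finset.mem_coe.mpr (Finset.mem_of_mem_erase h))
              · intro Q hQ hne
                obtain ⟨d, hdD, hdQ⟩ := hDdist Q hQ hne
                by_cases hdy : d = y
                · subst hdy
                  have hinvd : 𝒰.inv d ∈ Q := ((hQ.1.2 d hyS).1).resolve_left hdQ
                  by_cases hxQ : x ∈ Q
                  · have hnotin := hQ.2.2 x hxQ (𝒰.inv d) hinvd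
                    rw [inv_sup_eq, 𝒰.inv_inv, inf_comm] at hnotin
                    exact ⟨d ⊓ 𝒰.inv x, Finset.mem_insert_self _ _, hnotin⟩
                  · exact ⟨x, Finset.mem_insert_of_mem
                      (Finset.mem_erase.mpr ⟨hxy, hxD⟩), hxQ⟩
                · exact ⟨d, Finset.mem_insert_of_mem
                    (Finset.mem_erase.mpr ⟨hdy, hdD⟩), hdQ⟩
            · -- x ⊓ y* ∈ S : replace x by the corner x ⊓ y*
              have hvP : x ⊓ 𝒰.inv y ∈ P :=
                corner_mem 𝒰 hP hxP hyP hnle hylex hmeet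
              have hvlex : x ⊓ 𝒰.inv y ≤ x := inf_le_left
              have hvnex : x ⊓ 𝒰.inv y ≠ x := by
                intro h; apply hnle; rw [← h]; exact inf_le_right
              refine ih (insert (x ⊓ 𝒰.inv y) (D.erase x)) ?_ ?_ ?_
              · have h1 : muF (D.erase x) + downN x = muF D :=
                  Finset.sum_erase_add _ _ hxD
                have hlt : downN (x ⊓ 𝒰.inv y) < downN x := downN_lt hvlex hvnex
                by_cases hmem : (x ⊓ 𝒰.inv y) ∈ D.erase x
                · rw [Finset.insert_eq_self.mpr hmem]
                  omega
                · have h2 : muF (insert (x ⊓ 𝒰.inv y) (D.erase x)) =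
                      downN (x ⊓ 𝒰.inv y) + muF (D.erase x) :=
                    Finset.sum_insert hmem
                  omega
              · intro a ha
                rcases Finset.mem_insert.mp (Finset.mem_coe.mp ha) with h | h
                · rw [h]; exact hvP
                · exact hDP (Finset.mem_coe.mpr (Finset.mem_of_mem_erase h))
              · intro Q hQ hne
                obtain ⟨d, hdD, hdQ⟩ := hDdist Q hQ hne
                by_cases hdx : d = x
                · subst hdx
                  have hinvd : 𝒰.inv d ∈ Q := ((hQ.1.2 d hxS).1).resolve_left hdQ
                  by_cases hyQ : y ∈ Q
                  · have hnotin := hQ.2.2 (𝒰.inv d) hinvd y hyQ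
                    rw [inv_sup_eq, 𝒰.inv_inv] at hnotin
                    exact ⟨d ⊓ 𝒰.inv y, Finset.mem_insert_self _ _, hnotin⟩
                  · exact ⟨y, Finset.mem_insert_of_mem
                      (Finset.mem_erase.mpr ⟨hyx_ne, hyD⟩), hyQ⟩
                · exact ⟨d, Finset.mem_insert_of_mem
                    (Finset.mem_erase.mpr ⟨hdx, hdD⟩), hdQ⟩
  refine key (muF P.toFinset + 1) P.toFinset (Nat.lt_succ_self _) ?_ ?_
  · rw [Set.coe_toFinset]
  · intro Q hQ hne
    by_contra hno
    push_neg at hno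
    apply hPdist Q hQ hne
    intro p hp
    exact hno p (Set.mem_toFinset.mpr hp)

end SepDemo
end

section
/- Let U be a submodular universe, k ∈ ℕ, and let s ∈ S_k be a splice for r ∈ S_k. Let σ ⊆ S_k be a star with some x ∈ σ satisfying r ≤ x. If a profile P of S_k includes both σ and the shift σ' := σ_x^s, and σ has property Eff(P), then σ' also has property Eff(P). -/
namespace SepDemo

variable {U : Type*} [Lattice U] [Fintype U]

/-- If `s ∈ S_k` is a splice for `r ∈ S_k`, `σ ⊆ S_k` is a star
with some `x ∈ σ`, `r ≤ x`, and a profile `P` of `S_k` includes both `σ` and the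
shift `σ' := σ_x^s`, then `Eff(P)` for `σ` implies `Eff(P)` for `σ'`. -/
theorem eff_shift (𝒱 : SubmodUniverse U) (k : ℕ) (r s : U)
    (hr : r ∈ Sk 𝒱 k) (hs : s ∈ Sk 𝒱 k) (hsplice : SpliceFor 𝒱 s r)
    (σ : Set U) (hσS : σ ⊆ Sk 𝒱 k) (hstar : IsStar 𝒱.toSepUniverse σ)
    (x : U) (hx : x ∈ σ) (hrx : r ≤ x)
    (P : Set U) (hP : IsProfile 𝒱.toSepUniverse (Sk 𝒱 k) P)
    (hσP : σ ⊆ P) (hσ'P : shiftStar 𝒱.toSepUniverse σ x s ⊆ P)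
    (heff : EffProp 𝒱 σ P) :
    EffProp 𝒱 (shiftStar 𝒱.toSepUniverse σ x s) P := by
  rintro ⟨z, hz, s', hs'P, hzs', hord⟩
  -- splice in usable form
  have hsp : ∀ t : U, r ≤ t → t ≤ s → 𝒱.ord s ≤ 𝒱.ord t := by
    intro t h1 h2
    by_contra h
    exact hsplice.2 ⟨t, h1, h2, Nat.lt_of_not_le h⟩
  rcases hz with hz | ⟨y, hy, hz⟩
  · -- z = x ⊔ s
    subst hz
    have h1 : 𝒱.ord s ≤ 𝒱.ord (x ⊓ s) :=
      hsp _ (le_inf hrx hsplice.1) inf_le_right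
    have h2 := 𝒱.submod x s
    have hxle : 𝒱.ord (x ⊔ s) ≤ 𝒱.ord x := by omega
    exact heff ⟨x, hx, s', hs'P, le_trans (le_trans le_sup_left hzs') (le_refl s'),
      by omega⟩
  · -- z = y ⊓ s*
    obtain ⟨hyσ, hynex⟩ := hy
    subst hz
    set si := 𝒱.inv s with hsi
    have hord' : 𝒱.ord s' < 𝒱.ord (y ⊓ si) := hord
    have hyP : y ∈ P := hσP hyσ
    -- r ≤ inv y
    have hyx : y ≤ 𝒱.inv x := hstar y hyσ x hx hynex
    have hxr : 𝒱.inv x ≤ 𝒱.inv r := (𝒱.le_iff r x).mp hrx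
    have hry : r ≤ 𝒱.inv y := by
      have : y ≤ 𝒱.inv r := le_trans hyx hxr
      have := (𝒱.le_iff y (𝒱.inv r)).mp this
      rwa [𝒱.inv_inv] at this
    -- key: ord ((y ⊓ s') ⊔ si) ≥ ord s
    have hkey : 𝒱.ord s ≤ 𝒱.ord ((y ⊓ s') ⊔ si) := by
      set t := (y ⊓ s') ⊔ si with ht
      have hts : t ≤ 𝒱.inv r := by
        apply sup_le
        · exact le_trans inf_le_left (le_trans hyx hxr)
        · exact (𝒱.le_iff r s).mp hsplice.1
      have h1 : r ≤ 𝒱.inv t := by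
        have := (𝒱.le_iff t (𝒱.inv r)).mp hts
        rwa [𝒱.inv_inv] at this
      have h2 : 𝒱.inv t ≤ s := by
        have : 𝒱.inv s ≤ t := le_sup_right
        have := (𝒱.le_iff (𝒱.inv s) t).mp this
        rwa [𝒱.inv_inv] at this
      calc 𝒱.ord s ≤ 𝒱.ord (𝒱.inv t) := hsp _ h1 h2
        _ = 𝒱.ord t := 𝒱.ord_inv t
    -- (y ⊓ s') ⊓ si = y ⊓ si
    have hmeet : (y ⊓ s') ⊓ si = y ⊓ si := by
      apply le_antisymm
      · exact inf_le_inf_right si inf_le_left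
      · exact le_inf (le_inf inf_le_left hzs') inf_le_right
    have hsub1 := 𝒱.submod (y ⊓ s') si
    rw [hmeet] at hsub1
    have hordsi : 𝒱.ord si = 𝒱.ord s := 𝒱.ord_inv s
    -- ord (y ⊓ si) ≤ ord (y ⊓ s')
    have hA : 𝒱.ord (y ⊓ si) ≤ 𝒱.ord (y ⊓ s') := by omega
    clear hord
    have hsub2 := 𝒱.submod y s'
    have hB : 𝒱.ord (y ⊔ s') < 𝒱.ord y := by omega
    -- y ⊔ s' ∈ P
    have hyk : y ∈ Sk 𝒱 k := hσS hyσ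
    have hwk : y ⊔ s' ∈ Sk 𝒱 k := lt_trans hB hyk
    have hnin : 𝒱.inv (y ⊔ s') ∉ P := hP.2.2 y hyP s' hs'P
    have hwP : y ⊔ s' ∈ P := by
      rcases (hP.1.2 (y ⊔ s') hwk).1 with h | h
      · exact h
      · exact absurd h hnin
    exact heff ⟨y, hyσ, y ⊔ s', hwP, le_sup_left, hB⟩

end SepDemo
end
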